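/- Let L : H → G be bounded linear with 0 < ‖L‖ ≤ 1, let B be strictly positive on G, let γ > 0, and set θ = 1/(1 + γ‖B‖). Then θ (L* ∘ B ∘ L) ≼ L ⊡_γ B ≼ L* ∘ B ∘ L, where L ⊡_γ B = L* ∘ (B⁻¹ + γ(Id_G − L L*))⁻¹ ∘ L is the resolvent cocomposition. -/

import Mathlib

open ContinuousLinearMap MeasureTheory

noncomputable section

variable {E : Type*} [NormedAddCommGroup E] [InnerProductSpace ℝ E] [CompleteSpace E]
variable {H G : Type*} [NormedAddCommGroup H] [InnerProductSpace ℝ H] [CompleteSpace H]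
  [NormedAddCommGroup G] [InnerProductSpace ℝ G] [CompleteSpace G]

/-- Löwner partial order: `A ≼ B` iff `B - A` is a positive operator. -/
def Loewner (A B : E →L[ℝ] E) : Prop := (B - A).IsPositive

/-- Strictly positive operators: `α • Id ≼ A` for some `α > 0`. -/
def StrictlyPos (A : E →L[ℝ] E) : Prop :=
  IsSelfAdjoint A ∧ ∃ α : ℝ, 0 < α ∧ Loewner (α • (1 : E →L[ℝ] E)) A

/-- Bounded below linear operator. -/
def BoundedBelow (L : H →L[ℝ] G) : Prop := ∃ β : ℝ, 0 < β ∧ ∀ x : H, β * ‖x‖ ≤ ‖L x‖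

/-- Resolvent cocomposition `L ⊡_γ B = L* ∘ (B⁻¹ + γ(Id − L L*))⁻¹ ∘ L`. -/
def rcc (L : H →L[ℝ] G) (γ : ℝ) (B : G →L[ℝ] G) : H →L[ℝ] H :=
  (adjoint L) ∘L (Ring.inverse (Ring.inverse B + γ • ((1 : G →L[ℝ] G) - L ∘L adjoint L))) ∘L L

/-- Resolvent composition `L ⊙_γ B = (L ⊡_{1/γ} B⁻¹)⁻¹`. -/
def rc (L : H →L[ℝ] G) (γ : ℝ) (B : G →L[ℝ] G) : H →L[ℝ] H :=
  Ring.inverse (rcc L (1/γ) (Ring.inverse B))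

/-- Parallel composition `L* ▸ B = (L* ∘ B⁻¹ ∘ L)⁻¹`. -/
def parallelComp (L : H →L[ℝ] G) (B : G →L[ℝ] G) : H →L[ℝ] H :=
  Ring.inverse ((adjoint L) ∘L (Ring.inverse B) ∘L L)

/-- `g(A,B) = inf {λ > 0 : A ≼ λ B}`. -/
def gThomp (A B : E →L[ℝ] E) : ℝ := sInf {l : ℝ | 0 < l ∧ Loewner A (l • B)}

/-- Thompson metric. -/
def dThomp (A B : E →L[ℝ] E) : ℝ := Real.log (max (gThomp A B) (gThomp B A))

/-- The (unique) positive square root of a positive operator. -/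
def opSqrt (A : E →L[ℝ] E) : E →L[ℝ] E :=
  letI := Classical.propDecidable
  if h : ∃ S : E →L[ℝ] E, S.IsPositive ∧ S * S = A then h.choose else 0

/-- Real power `A^t` of a strictly positive operator, `t ∈ (0,1)`, via the
Balakrishnan integral formula `A^t = (sin (π t)/π) ∫₀^∞ s^{t-1} A (A + s)⁻¹ ds`. -/
def opRpow (A : E →L[ℝ] E) (t : ℝ) : E →L[ℝ] E :=
  (Real.sin (Real.pi * t) / Real.pi) •
    ∫ s in Set.Ioi (0 : ℝ), s ^ (t - 1) • (A * Ring.inverse (A + s • (1 : E →L[ℝ] E)))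

/-- Geometric mean `A # B = A^{1/2} (A^{-1/2} B A^{-1/2})^{1/2} A^{1/2}`. -/
def geomMean (A B : E →L[ℝ] E) : E →L[ℝ] E :=
  opSqrt A * opSqrt (Ring.inverse (opSqrt A) * B * Ring.inverse (opSqrt A)) * opSqrt A

/-- `t`-weighted geometric mean `A #_t B = A^{1/2} (A^{-1/2} B A^{-1/2})^t A^{1/2}`. -/
def wGeomMean (t : ℝ) (A B : E →L[ℝ] E) : E →L[ℝ] E :=
  opSqrt A * opRpow (Ring.inverse (opSqrt A) * B * Ring.inverse (opSqrt A)) t * opSqrt A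

/-!
Inversion reverses the Löwner order on strictly positive operators, because
`⟪A⁻¹ x, x⟫ = sup_y (2 ⟪x, y⟫ - ⟪A y, y⟫)`, the supremum being attained at
`y = A⁻¹ x`. Since `0 ≤ 1 - L L* ≤ 1 ≤ ‖B‖ B⁻¹`, the operator `M = B⁻¹ + γ (1 - L L*)`
satisfies `B⁻¹ ≤ M ≤ (1 + γ ‖B‖) B⁻¹`; inverting gives `(1 + γ ‖B‖)⁻¹ B ≤ M⁻¹ ≤ B`, and
conjugating by `L` gives the claim.
-/

open RealInnerProductSpace

namespace ContinuousLinearMap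

instance instIsOrderedAddMonoid {𝕜 F : Type*} [RCLike 𝕜] [NormedAddCommGroup F]
    [InnerProductSpace 𝕜 F] : IsOrderedAddMonoid (F →L[𝕜] F) where
  add_le_add_left _ _ h _ := by simpa [le_def] using h

instance instZeroLEOneClass {𝕜 F : Type*} [RCLike 𝕜] [NormedAddCommGroup F]
    [InnerProductSpace 𝕜 F] : ZeroLEOneClass (F →L[𝕜] F) :=
  ⟨(nonneg_iff_isPositive _).2 isPositive_one⟩

instance instIsOrderedModule {F : Type*} [NormedAddCommGroup F] [InnerProductSpace ℝ F] :
    IsOrderedModule ℝ (F →L[ℝ] F) where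
  smul_le_smul_of_nonneg_left _ ha _ _ h := by
    simpa [le_def, ← smul_sub] using h.smul_of_nonneg ha
  smul_le_smul_of_nonneg_right _ hb _ _ h := by
    simpa [le_def, ← sub_smul] using hb.smul_of_nonneg (sub_nonneg.2 h)

end ContinuousLinearMap

lemma loewner_iff_le {F : Type*} [NormedAddCommGroup F] [InnerProductSpace ℝ F]
    {A B : F →L[ℝ] F} : Loewner A B ↔ A ≤ B := Iff.rfl

lemma strictlyPos_iff {A : E →L[ℝ] E} :
    StrictlyPos A ↔ IsSelfAdjoint A ∧ ∃ α : ℝ, 0 < α ∧ α • 1 ≤ A := Iff.rfl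

lemma adjoint_conj_le_adjoint_conj (L : H →L[ℝ] G) {A B : G →L[ℝ] G} (h : A ≤ B) :
    adjoint L ∘L A ∘L L ≤ adjoint L ∘L B ∘L L := by
  simpa [le_def, comp_sub, sub_comp] using h.adjoint_conj L

lemma IsSelfAdjoint.le_norm_smul_one {T : E →L[ℝ] E} (hT : IsSelfAdjoint T) :
    T ≤ ‖T‖ • 1 := by
  have hsa : IsSelfAdjoint (‖T‖ • (1 : E →L[ℝ] E) - T) :=
    (IsSelfAdjoint.smul (star_trivial _) (.one _)).sub hT
  refine (isPositive_iff' _).2 ⟨hsa, fun x ↦ ?_⟩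
  have h : ⟪T x, x⟫ ≤ ‖T‖ * ‖x‖ ^ 2 := calc
    ⟪T x, x⟫ ≤ ‖T x‖ * ‖x‖ := real_inner_le_norm _ _
    _ ≤ ‖T‖ * ‖x‖ * ‖x‖ := by gcongr; exact T.le_opNorm x
    _ = ‖T‖ * ‖x‖ ^ 2 := by ring
  simpa [inner_sub_left, real_inner_smul_left, real_inner_self_eq_norm_sq] using h

lemma one_sub_comp_adjoint_nonneg {L : H →L[ℝ] G} (hL : ‖L‖ ≤ 1) :
    0 ≤ 1 - L ∘L adjoint L := by
  have hnorm : ‖L ∘L adjoint L‖ ≤ 1 := calc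
    ‖L ∘L adjoint L‖ ≤ ‖L‖ * ‖adjoint L‖ := opNorm_comp_le _ _
    _ = ‖L‖ * ‖L‖ := by rw [LinearIsometryEquiv.norm_map]
    _ ≤ 1 := mul_le_one₀ hL (norm_nonneg _) hL
  refine sub_nonneg.2 ?_
  calc L ∘L adjoint L ≤ ‖L ∘L adjoint L‖ • 1 :=
        (isPositive_self_comp_adjoint L).isSelfAdjoint.le_norm_smul_one
    _ ≤ (1 : ℝ) • 1 := smul_le_smul_of_nonneg_right hnorm zero_le_one
    _ = 1 := one_smul _ _

lemma Ring.inverse_smul {𝕜 R : Type*} [Field 𝕜] [Semiring R] [Algebra 𝕜 R] {A : R}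
    (hA : IsUnit A) {c : 𝕜} (hc : c ≠ 0) :
    Ring.inverse (c • A) = c⁻¹ • Ring.inverse A :=
  Ring.inverse_unit ⟨c • A, c⁻¹ • Ring.inverse A,
    by rw [smul_mul_smul_comm, mul_inv_cancel₀ hc, Ring.mul_inverse_cancel _ hA, one_smul],
    by rw [smul_mul_smul_comm, inv_mul_cancel₀ hc, Ring.inverse_mul_cancel _ hA, one_smul]⟩

lemma two_inner_sub_inner_le_inner_ringInverse {A : E →L[ℝ] E} (hA : A.IsPositive)
    (hu : IsUnit A) (x y : E) : 2 * ⟪x, y⟫ - ⟪A y, y⟫ ≤ ⟪Ring.inverse A x, x⟫ := by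
  set z := Ring.inverse A x
  have hz : A z = x := by
    simpa using congrArg (· x) (Ring.mul_inverse_cancel A hu)
  have hsymm : ⟪A y, z⟫ = ⟪y, x⟫ := by
    rw [← hz]; exact hA.isSelfAdjoint.isSymmetric y z
  have h := hA.inner_nonneg_left (y - z)
  rw [map_sub, hz, inner_sub_left, inner_sub_right, inner_sub_right, hsymm] at h
  linarith [real_inner_comm x y, real_inner_comm x z]

lemma ringInverse_le_ringInverse {A B : E →L[ℝ] E} (hA : A.IsPositive) (hAu : IsUnit A)
    (hBu : IsUnit B) (h : A ≤ B) : Ring.inverse B ≤ Ring.inverse A := by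
  have hB : B.IsPositive := by simpa using hA.add h
  refine (isPositive_iff' _).2 ⟨hA.isSelfAdjoint.ringInverse.sub hB.isSelfAdjoint.ringInverse,
    fun x ↦ ?_⟩
  set y := Ring.inverse B x
  have hy : B y = x := by
    simpa using congrArg (· x) (Ring.mul_inverse_cancel B hBu)
  have hAB : ⟪A y, y⟫ ≤ ⟪B y, y⟫ := by
    simpa [inner_sub_left] using h.inner_nonneg_left y
  have hA' := two_inner_sub_inner_le_inner_ringInverse hA hAu x y
  have hBy : ⟪Ring.inverse B x, x⟫ = ⟪x, y⟫ := real_inner_comm _ _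
  rw [hy] at hAB
  rw [sub_apply, inner_sub_left, hBy]
  linarith

namespace StrictlyPos

variable {A B : E →L[ℝ] E}

lemma one : StrictlyPos (1 : E →L[ℝ] E) :=
  strictlyPos_iff.2 ⟨.one _, 1, one_pos, (one_smul ℝ (1 : E →L[ℝ] E)).le⟩

lemma isPositive (hA : StrictlyPos A) : A.IsPositive := by
  obtain ⟨-, α, hα, hαA⟩ := strictlyPos_iff.1 hA
  exact (nonneg_iff_isPositive A).1 ((smul_nonneg hα.le zero_le_one).trans hαA)

lemma isUnit (hA : StrictlyPos A) : IsUnit A := by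
  obtain ⟨-, α, hα, hαA⟩ := strictlyPos_iff.1 hA
  refine isUnit_of_forall_le_norm_inner_map A (c := ⟨α, hα.le⟩) hα fun x ↦ ?_
  have h : ‖x‖ ^ 2 * α ≤ ⟪A x, x⟫ := by
    have := hαA.inner_nonneg_left x
    simp only [sub_apply, inner_sub_left, smul_apply, one_apply_eq_self,
      real_inner_smul_left, real_inner_self_eq_norm_sq] at this
    linarith
  exact h.trans (Real.le_norm_self _)

lemma mono (hA : StrictlyPos A) (h : A ≤ B) : StrictlyPos B := by
  obtain ⟨hsa, α, hα, hαA⟩ := strictlyPos_iff.1 hA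
  exact ⟨by simpa using hsa.add (IsPositive.isSelfAdjoint h), α, hα, hαA.trans h⟩

lemma smul (hA : StrictlyPos A) {c : ℝ} (hc : 0 < c) : StrictlyPos (c • A) := by
  obtain ⟨hsa, α, hα, hαA⟩ := strictlyPos_iff.1 hA
  refine ⟨.smul (star_trivial c) hsa, c * α, mul_pos hc hα, ?_⟩
  rw [mul_smul]
  exact smul_le_smul_of_nonneg_left hαA hc.le

lemma inv_smul_one_le_ringInverse (hB : StrictlyPos B) {c : ℝ} (hc : 0 < c) (h : B ≤ c • 1) :
    c⁻¹ • 1 ≤ Ring.inverse B := by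
  simpa [Ring.inverse_smul isUnit_one hc.ne'] using
    ringInverse_le_ringInverse hB.isPositive hB.isUnit (one.smul hc).isUnit h

lemma ringInverse (hB : StrictlyPos B) : StrictlyPos (Ring.inverse B) := by
  refine ⟨hB.1.ringInverse, (‖B‖ + 1)⁻¹, by positivity,
    hB.inv_smul_one_le_ringInverse (by positivity) ?_⟩
  exact hB.1.le_norm_smul_one.trans (smul_le_smul_of_nonneg_right (by linarith) zero_le_one)

lemma norm_pos [Nontrivial E] (hB : StrictlyPos B) : 0 < ‖B‖ :=
  norm_pos_iff.2 hB.isUnit.ne_zero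

end StrictlyPos

theorem ringInverse_add_sandwich {A P : E →L[ℝ] E} {κ : ℝ} (hA : StrictlyPos A)
    (hκ : 0 ≤ κ) (hP : 0 ≤ P) (hPA : P ≤ κ • A) :
    (1 + κ)⁻¹ • Ring.inverse A ≤ Ring.inverse (A + P) ∧
      Ring.inverse (A + P) ≤ Ring.inverse A := by
  have hlow : A ≤ A + P := le_add_of_nonneg_right hP
  have hup : A + P ≤ (1 + κ) • A := by
    rw [add_smul, one_smul]; exact add_le_add_right hPA A
  have hAP := hA.mono hlow
  refine ⟨?_, ringInverse_le_ringInverse hA.isPositive hA.isUnit hAP.isUnit hlow⟩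
  rw [← Ring.inverse_smul hA.isUnit (by positivity)]
  exact ringInverse_le_ringInverse hAP.isPositive hAP.isUnit (hA.smul (by positivity)).isUnit hup

theorem rcc_sandwich (L : H →L[ℝ] G) (hL0 : 0 < ‖L‖) (hL1 : ‖L‖ ≤ 1)
    (B : G →L[ℝ] G) (hB : StrictlyPos B) (γ : ℝ) (hγ : 0 < γ) :
    Loewner ((1 / (1 + γ * ‖B‖)) • ((adjoint L) ∘L B ∘L L)) (rcc L γ B) ∧
      Loewner (rcc L γ B) ((adjoint L) ∘L B ∘L L) := by
  obtain ⟨x, hx⟩ : ∃ x, L x ≠ 0 := by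
    by_contra! h
    exact hL0.ne' (norm_eq_zero.2 (ext h))
  have : Nontrivial G := nontrivial_of_ne _ _ hx
  have hBn := hB.norm_pos
  set Q := (1 : G →L[ℝ] G) - L ∘L adjoint L
  have hQ1 : Q ≤ 1 := sub_le_self _ ((nonneg_iff_isPositive _).2 (isPositive_self_comp_adjoint L))
  have hP : γ • Q ≤ (γ * ‖B‖) • Ring.inverse B := calc
    γ • Q ≤ γ • 1 := smul_le_smul_of_nonneg_left hQ1 hγ.le
    _ = (γ * ‖B‖) • (‖B‖⁻¹ • 1) := by
        rw [smul_smul, mul_assoc, mul_inv_cancel₀ hBn.ne', mul_one]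
    _ ≤ (γ * ‖B‖) • Ring.inverse B := smul_le_smul_of_nonneg_left
        (hB.inv_smul_one_le_ringInverse hBn hB.1.le_norm_smul_one) (by positivity)
  obtain ⟨hlow, hup⟩ := ringInverse_add_sandwich hB.ringInverse (by positivity)
    (smul_nonneg hγ.le (one_sub_comp_adjoint_nonneg hL1)) hP
  rw [Ring.inverse_inverse hB.isUnit] at hlow hup
  refine ⟨loewner_iff_le.2 ?_, adjoint_conj_le_adjoint_conj L hup⟩
  simpa [rcc, one_div, comp_smul, smul_comp] using adjoint_conj_le_adjoint_conj L hlow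

end
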